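/- arXiv:1707.02522 — 2 statements merged into one kernel-verified Lean document; each statement's English description precedes it below -/
import Mathlib

section
/- Upper bound of Theorem 4: for every state ρ and every ε ≥ 0, the one-shot coherence cost under MIO exceeds the smoothed max-relative entropy of coherence by at most one bit: C_MIO^ε(ρ) ≤ C_max^ε(ρ) + 1. -/
open scoped Matrix ComplexOrder

namespace OneShot

variable {ι κ : Type*} [Fintype ι] [DecidableEq ι] [Fintype κ] [DecidableEq κ]

/-- A quantum state: a positive semidefinite matrix with unit trace. -/
def IsState (ρ : Matrix ι ι ℂ) : Prop := ρ.PosSemidef ∧ ρ.trace = 1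

/-- An incoherent state: a state that is diagonal in the computational basis. -/
def IsIncoherent (ρ : Matrix ι ι ℂ) : Prop := IsState ρ ∧ ρ.IsDiag

/-- The completely dephasing channel `Δ`. -/
def dephase (ρ : Matrix ι ι ℂ) : Matrix ι ι ℂ := Matrix.diagonal fun i => ρ i i

/-- The max-relative entropy of coherence
`C_max(ρ) = min_{δ ∈ 𝓘} D_max(ρ‖δ) = log₂ min {λ ≥ 0 | ∃ δ ∈ 𝓘, ρ ≤ λ δ}`. -/
noncomputable def Cmax (ρ : Matrix ι ι ℂ) : ℝ :=
  Real.logb 2 (sInf {l : ℝ | 0 ≤ l ∧ ∃ δ, IsIncoherent δ ∧ (l • δ - ρ).PosSemidef})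

/-- `C_{Δ,max}(ρ) = log₂ min {λ ≥ 0 | ρ ≤ λ Δ(ρ)}`. -/
noncomputable def CDmax (ρ : Matrix ι ι ℂ) : ℝ :=
  Real.logb 2 (sInf {l : ℝ | 0 ≤ l ∧ (l • dephase ρ - ρ).PosSemidef})

/-- Complete positivity of a linear map on matrices. -/
def CompletelyPositive (Λ : Matrix ι ι ℂ →ₗ[ℂ] Matrix κ κ ℂ) : Prop :=
  ∀ (k : ℕ) (M : Matrix (Fin k × ι) (Fin k × ι) ℂ), M.PosSemidef →
    (Matrix.of fun p q : Fin k × κ =>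
      Λ (Matrix.of fun x y => M (p.1, x) (q.1, y)) p.2 q.2).PosSemidef

/-- Trace preservation. -/
def TracePreserving (Λ : Matrix ι ι ℂ →ₗ[ℂ] Matrix κ κ ℂ) : Prop :=
  ∀ A, (Λ A).trace = A.trace

/-- A maximally incoherent operation (MIO): a CPTP map sending every incoherent state
to an incoherent state. -/
def IsMIO (Λ : Matrix ι ι ℂ →ₗ[ℂ] Matrix κ κ ℂ) : Prop :=
  CompletelyPositive Λ ∧ TracePreserving Λ ∧ ∀ δ, IsIncoherent δ → IsIncoherent (Λ δ)

/-- A dephasing-covariant incoherent operation (DIO): a CPTP map commuting with `Δ`. -/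
def IsDIO (Λ : Matrix ι ι ℂ →ₗ[ℂ] Matrix ι ι ℂ) : Prop :=
  CompletelyPositive Λ ∧ TracePreserving Λ ∧ ∀ ρ, Λ (dephase ρ) = dephase (Λ ρ)

/-- An incoherent-preserving (Kraus) operator: `K δ Kᴴ` is a nonnegative multiple of an
incoherent state, for every incoherent state `δ`. -/
def IncoherentPreserving (K : Matrix κ ι ℂ) : Prop :=
  ∀ δ : Matrix ι ι ℂ, IsIncoherent δ →
    ∃ c : ℝ, 0 ≤ c ∧ ∃ δ' : Matrix κ κ ℂ, IsIncoherent δ' ∧ K * δ * Kᴴ = (c : ℂ) • δ'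

/-- An incoherent operation (IO). -/
def IsIO (Λ : Matrix ι ι ℂ →ₗ[ℂ] Matrix κ κ ℂ) : Prop :=
  ∃ (N : ℕ) (K : Fin N → Matrix κ ι ℂ),
    (∀ n, IncoherentPreserving (K n)) ∧ (∑ n, (K n)ᴴ * K n = 1) ∧
    ∀ ρ, Λ ρ = ∑ n, K n * ρ * (K n)ᴴ

/-- A strictly incoherent operation (SIO). -/
def IsSIO (Λ : Matrix ι ι ℂ →ₗ[ℂ] Matrix κ κ ℂ) : Prop :=
  ∃ (N : ℕ) (K : Fin N → Matrix κ ι ℂ),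
    (∀ n, IncoherentPreserving (K n)) ∧ (∀ n, IncoherentPreserving (K n)ᴴ) ∧
    (∑ n, (K n)ᴴ * K n = 1) ∧ ∀ ρ, Λ ρ = ∑ n, K n * ρ * (K n)ᴴ

/-- The outer product `|ψ⟩⟨ψ|`. -/
def outer (ψ : ι → ℂ) : Matrix ι ι ℂ := Matrix.of fun i j => ψ i * star (ψ j)

/-- `T ψ` is the number of nonzero computational-basis coefficients of `ψ`. -/
noncomputable def T (ψ : ι → ℂ) : ℕ := (Finset.univ.filter fun i => ψ i ≠ 0).card

/-- A finite pure-state decomposition `ρ = Σ_j p_j |ψ_j⟩⟨ψ_j|`. -/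
def IsDecomposition (ρ : Matrix ι ι ℂ) (n : ℕ) (p : Fin n → ℝ) (ψ : Fin n → ι → ℂ) : Prop :=
  (∀ j, 0 < p j) ∧ (∑ j, p j = 1) ∧ (∀ j, ∑ i, Complex.normSq (ψ j i) = 1) ∧
    ρ = ∑ j, p j • outer (ψ j)

/-- `C_0(ρ) = min over decompositions of max_j log₂ T(ψ_j)`. -/
noncomputable def C0 (ρ : Matrix ι ι ℂ) : ℝ :=
  sInf { r | ∃ n p ψ, IsDecomposition ρ n p ψ ∧
    r = Real.logb 2 (↑(Finset.univ.sup fun j => T (ψ j)) : ℝ) }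

/-- Matrix square root of a positive semidefinite matrix (junk value `0` elsewhere). -/
noncomputable def msqrt (A : Matrix ι ι ℂ) : Matrix ι ι ℂ :=
  letI := Classical.propDecidable A.PosSemidef
  if h : A.PosSemidef then
    (h.1.eigenvectorUnitary : Matrix ι ι ℂ) *
      Matrix.diagonal (fun i => ((Real.sqrt (h.1.eigenvalues i) : ℝ) : ℂ)) *
      (star h.1.eigenvectorUnitary : Matrix ι ι ℂ)
  else 0

/-- Uhlmann fidelity `F(ρ,σ) = (Tr √(√ρ σ √ρ))²`. -/
noncomputable def Fid (ρ σ : Matrix ι ι ℂ) : ℝ :=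
  ((msqrt (msqrt ρ * σ * msqrt ρ)).trace.re) ^ 2

/-- Smoothed `C_max`. -/
noncomputable def Cmaxeps (ρ : Matrix ι ι ℂ) (ε : ℝ) : ℝ :=
  sInf { r | ∃ ρ', IsState ρ' ∧ 1 - ε ≤ Fid ρ ρ' ∧ r = Cmax ρ' }

/-- Smoothed `C_{Δ,max}`. -/
noncomputable def CDmaxeps (ρ : Matrix ι ι ℂ) (ε : ℝ) : ℝ :=
  sInf { r | ∃ ρ', IsState ρ' ∧ 1 - ε ≤ Fid ρ ρ' ∧ r = CDmax ρ' }

/-- Smoothed `C_0`. -/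
noncomputable def C0eps (ρ : Matrix ι ι ℂ) (ε : ℝ) : ℝ :=
  sInf { r | ∃ ρ', IsState ρ' ∧ 1 - ε ≤ Fid ρ ρ' ∧ r = C0 ρ' }

/-- The maximally coherent state `Ψ_M = |Ψ_M⟩⟨Ψ_M|` of dimension `M`. -/
noncomputable def PsiM (M : ℕ) : Matrix (Fin M) (Fin M) ℂ := Matrix.of fun _ _ => (1 : ℂ) / M

/-- One-shot coherence cost under MIO. -/
noncomputable def CMIOeps (ρ : Matrix ι ι ℂ) (ε : ℝ) : ℝ :=
  sInf { r | ∃ M : ℕ, 1 ≤ M ∧ r = Real.logb 2 M ∧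
    ∃ Λ : Matrix (Fin M) (Fin M) ℂ →ₗ[ℂ] Matrix ι ι ℂ, IsMIO Λ ∧ 1 - ε ≤ Fid ρ (Λ (PsiM M)) }

/-- One-shot coherence cost under DIO. -/
noncomputable def CDIOeps (ρ : Matrix ι ι ℂ) (ε : ℝ) : ℝ :=
  sInf { r | ∃ M : ℕ, 1 ≤ M ∧ r = Real.logb 2 M ∧
    ∃ Λ : Matrix (Fin M) (Fin M) ℂ →ₗ[ℂ] Matrix ι ι ℂ,
      CompletelyPositive Λ ∧ TracePreserving Λ ∧ (∀ ω, Λ (dephase ω) = dephase (Λ ω)) ∧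
      1 - ε ≤ Fid ρ (Λ (PsiM M)) }

/-- One-shot coherence cost under IO. -/
noncomputable def CIOeps (ρ : Matrix ι ι ℂ) (ε : ℝ) : ℝ :=
  sInf { r | ∃ M : ℕ, 1 ≤ M ∧ r = Real.logb 2 M ∧
    ∃ Λ : Matrix (Fin M) (Fin M) ℂ →ₗ[ℂ] Matrix ι ι ℂ, IsIO Λ ∧ 1 - ε ≤ Fid ρ (Λ (PsiM M)) }

/-- One-shot coherence cost under SIO. -/
noncomputable def CSIOeps (ρ : Matrix ι ι ℂ) (ε : ℝ) : ℝ :=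
  sInf { r | ∃ M : ℕ, 1 ≤ M ∧ r = Real.logb 2 M ∧
    ∃ Λ : Matrix (Fin M) (Fin M) ℂ →ₗ[ℂ] Matrix ι ι ℂ, IsSIO Λ ∧ 1 - ε ≤ Fid ρ (Λ (PsiM M)) }

/-- Matrix logarithm (base 2) via the spectral decomposition, with `log₂ 0 = 0` junk
convention on the kernel, and junk value `0` on non-Hermitian matrices. -/
noncomputable def mlog2 (A : Matrix ι ι ℂ) : Matrix ι ι ℂ :=
  letI := Classical.propDecidable A.IsHermitian
  if h : A.IsHermitian then
    (h.eigenvectorUnitary : Matrix ι ι ℂ) *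
      Matrix.diagonal (fun i => (Real.logb 2 (h.eigenvalues i) : ℂ)) *
      (h.eigenvectorUnitary : Matrix ι ι ℂ)ᴴ
  else 0

/-- The relative entropy of coherence `C_r(ρ) = min_{δ ∈ 𝓘} S(ρ‖δ)`, where the minimum
is (equivalently) restricted to those `δ` whose support contains the support of `ρ`,
on which `S(ρ‖δ) = Tr[ρ (log₂ ρ − log₂ δ)]` is finite. -/
noncomputable def Cr (ρ : Matrix ι ι ℂ) : ℝ :=
  sInf { r | ∃ δ, IsIncoherent δ ∧ (∀ v : ι → ℂ, δ.mulVec v = 0 → ρ.mulVec v = 0) ∧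
    r = ((ρ * (mlog2 ρ - mlog2 δ)).trace).re }

/-- Von Neumann entropy (base 2). -/
noncomputable def vN (σ : Matrix ι ι ℂ) : ℝ := -((σ * mlog2 σ).trace.re)

/-- The coherence of formation. -/
noncomputable def Cf (ρ : Matrix ι ι ℂ) : ℝ :=
  sInf { r | ∃ n p ψ, IsDecomposition ρ n p ψ ∧
    r = ∑ j, p j * vN (dephase (outer (ψ j))) }

/-- The set `A_ρ = { (1/t)[(1+t)Δ(ρ) − ρ] : t > 0, (1+t)Δ(ρ) − ρ ≥ 0 }`. -/
def Aset (ρ : Matrix ι ι ℂ) : Set (Matrix ι ι ℂ) :=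
  { σ | ∃ t : ℝ, 0 < t ∧ ((1 + t) • dephase ρ - ρ).PosSemidef ∧
      σ = t⁻¹ • ((1 + t) • dephase ρ - ρ) }

/-- The `n`-fold tensor power `ρ^{⊗ n}`. -/
def tpow (ρ : Matrix ι ι ℂ) (n : ℕ) : Matrix (Fin n → ι) (Fin n → ι) ℂ :=
  Matrix.of fun i j => ∏ t, ρ (i t) (j t)

/-!
If `ρ ≤ M δ` for an incoherent state `δ` and an integer `M ≥ 2`, put `τ = (M δ - ρ) / (M - 1)`.
The measure-and-prepare channel `X ↦ Tr(Ψ_M X) ρ + Tr((1 - Ψ_M) X) τ` sends `Ψ_M` to `ρ`, and since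
`Tr(Ψ_M δ') = 1/M` for every incoherent `δ'` it sends every incoherent state to
`ρ / M + (1 - 1/M) τ = δ`; so it is an MIO. With `λ = 2 ^ C_max(ρ) ≥ 1`, the integer
`M = ⌊λ⌋ + 1 ≤ 2λ` is admissible, which costs at most one bit more than `C_max(ρ)`.
Applying this to every admissible smoothing of the target state and taking the infimum gives
the bound.
-/

open scoped MatrixOrder Kronecker

section MeasurePrepare

variable {m n : Type*}

lemma posSemidef_trace_mul_blocks {α : Type*} [Fintype m] [Fintype α]
    {M : Matrix (α × m) (α × m) ℂ} (hM : M.PosSemidef) {P : Matrix m m ℂ} (hP : P.PosSemidef) :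
    (Matrix.of fun a b : α => (P * Matrix.of fun x y => M (a, x) (b, y)).trace).PosSemidef := by
  classical
  -- `Tr(P M_ab) = Σ_{x,y} M_(a,x),(b,y) P_yx` is a compression of the Schur product `M ⊙ (J ⊗ Pᵀ)`
  let E : Matrix (α × m) α ℂ := Matrix.of fun p a => if p.1 = a then 1 else 0
  have h : (Matrix.of fun a b : α => (P * Matrix.of fun x y => M (a, x) (b, y)).trace) =
      Eᴴ * (M ⊙ Pᵀ.submatrix Prod.snd Prod.snd) * E := by
    ext a b
    simp [Matrix.mul_apply, Matrix.trace, E, Fintype.sum_prod_type, Matrix.conjTranspose_apply,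
      mul_comm]
  rw [h]
  exact (hM.hadamard (hP.transpose.submatrix _)).conjTranspose_mul_mul_same E

noncomputable def traceSMul [Fintype m] (P : Matrix m m ℂ) (A : Matrix n n ℂ) :
    Matrix m m ℂ →ₗ[ℂ] Matrix n n ℂ :=
  LinearMap.smulRight (Matrix.traceLinearMap m ℂ ℂ ∘ₗ LinearMap.mulLeft ℂ P) A

@[simp] lemma traceSMul_apply [Fintype m] (P : Matrix m m ℂ) (A : Matrix n n ℂ)
    (X : Matrix m m ℂ) : traceSMul P A X = (P * X).trace • A := rfl

lemma CompletelyPositive.add {Λ₁ Λ₂ : Matrix m m ℂ →ₗ[ℂ] Matrix n n ℂ}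
    (h₁ : CompletelyPositive Λ₁) (h₂ : CompletelyPositive Λ₂) : CompletelyPositive (Λ₁ + Λ₂) :=
  fun k M hM => (h₁ k M hM).add (h₂ k M hM)

lemma completelyPositive_traceSMul [Fintype m] [Fintype n] {P : Matrix m m ℂ}
    {A : Matrix n n ℂ} (hP : P.PosSemidef) (hA : A.PosSemidef) :
    CompletelyPositive (traceSMul P A) := by
  intro k M hM
  have h : (Matrix.of fun p q : Fin k × n =>
      traceSMul P A (Matrix.of fun x y => M (p.1, x) (q.1, y)) p.2 q.2) =
      (Matrix.of fun a b : Fin k => (P * Matrix.of fun x y => M (a, x) (b, y)).trace) ⊗ₖ A := by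
    ext p q
    simp [Matrix.kroneckerMap_apply]
  rw [h]
  exact (posSemidef_trace_mul_blocks hM hP).kronecker hA

lemma tracePreserving_traceSMul_add_traceSMul_one_sub [Fintype m] [DecidableEq m] [Fintype n]
    (P : Matrix m m ℂ) {A B : Matrix n n ℂ} (hA : A.trace = 1) (hB : B.trace = 1) :
    TracePreserving (traceSMul P A + traceSMul (1 - P) B) := by
  intro X
  simp only [LinearMap.add_apply, traceSMul_apply, Matrix.trace_add, Matrix.trace_smul, hA, hB,
    Matrix.sub_mul, Matrix.one_mul, Matrix.trace_sub, smul_eq_mul, mul_one, add_sub_cancel]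

end MeasurePrepare

lemma psiM_mul_self {M : ℕ} (hM : M ≠ 0) : PsiM M * PsiM M = PsiM M := by
  ext i j
  simp only [PsiM, one_div, Matrix.mul_apply, Matrix.of_apply, Finset.sum_const,
    Finset.card_univ, Fintype.card_fin, nsmul_eq_mul]
  field_simp

lemma isStarProjection_psiM {M : ℕ} (hM : M ≠ 0) : IsStarProjection (PsiM M) :=
  ⟨psiM_mul_self hM, by ext i j; simp [PsiM]⟩

lemma trace_psiM {M : ℕ} (hM : M ≠ 0) : (PsiM M).trace = 1 := by
  simp only [Matrix.trace, PsiM, one_div, Matrix.diag_apply, Matrix.of_apply, Finset.sum_const,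
    Finset.card_univ, Fintype.card_fin, nsmul_eq_mul]
  field_simp

lemma trace_psiM_mul_of_isDiag {M : ℕ} {δ : Matrix (Fin M) (Fin M) ℂ} (hδ : δ.IsDiag) :
    (PsiM M * δ).trace = δ.trace / M := by
  simp only [Matrix.trace, Matrix.diag, Matrix.mul_apply, Finset.sum_div]
  refine Finset.sum_congr rfl fun i _ => ?_
  rw [Finset.sum_eq_single i (fun j _ hj => by rw [hδ hj, mul_zero]) (by simp)]
  simp [PsiM, div_eq_inv_mul]

section States

variable {n : Type*} [Fintype n]

lemma IsState.nonempty {ρ : Matrix n n ℂ} (hρ : IsState ρ) : Nonempty n := by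
  by_contra h
  rw [not_nonempty_iff] at h
  simpa [Matrix.trace] using hρ.2

lemma IsState.le_one [DecidableEq n] {ρ : Matrix n n ℂ} (hρ : IsState ρ) : ρ ≤ 1 := by
  obtain ⟨hpsd, htr⟩ := hρ
  rw [CFC.le_one_iff (R := ℝ) ρ hpsd.1.isSelfAdjoint, hpsd.1.spectrum_real_eq_range_eigenvalues]
  rintro _ ⟨i, rfl⟩
  have hsum : ∑ j, hpsd.1.eigenvalues j = 1 := by
    apply RCLike.ofReal_injective (K := ℂ)
    rw [RCLike.ofReal_sum, ← hpsd.1.trace_eq_sum_eigenvalues, htr, RCLike.ofReal_one]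
  rw [← hsum]
  exact Finset.single_le_sum (fun j _ => hpsd.eigenvalues_nonneg j) (Finset.mem_univ i)

lemma isIncoherent_maxMixed [DecidableEq n] [Nonempty n] :
    IsIncoherent ((Fintype.card n : ℝ)⁻¹ • (1 : Matrix n n ℂ)) := by
  refine ⟨⟨Matrix.PosSemidef.one.smul (by positivity), ?_⟩, Matrix.isDiag_one.smul _⟩
  rw [Matrix.trace_smul, Matrix.trace_one, Complex.real_smul]
  push_cast
  exact inv_mul_cancel₀ (Nat.cast_ne_zero.mpr Fintype.card_ne_zero)

lemma msqrt_eq_cfcSqrt [DecidableEq n] {A : Matrix n n ℂ} (hA : A.PosSemidef) :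
    msqrt A = CFC.sqrt A := by
  rw [CFC.sqrt_eq_cfc, cfc_nnreal_eq_real _ A, hA.1.cfc_eq, msqrt, dif_pos hA]
  simp only [Matrix.IsHermitian.cfc, Unitary.conjStarAlgAut_apply]
  congr 3
  ext i
  simp [Real.coe_sqrt, hA.eigenvalues_nonneg]

lemma Fid_self [DecidableEq n] {ρ : Matrix n n ℂ} (hρ : IsState ρ) : Fid ρ ρ = 1 := by
  have hsqrt := CFC.sqrt_mul_sqrt_self ρ hρ.1.nonneg
  have hconj : msqrt ρ * ρ * msqrt ρ = ρ ^ 2 := by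
    rw [msqrt_eq_cfcSqrt hρ.1]
    calc CFC.sqrt ρ * ρ * CFC.sqrt ρ = CFC.sqrt ρ * (CFC.sqrt ρ * CFC.sqrt ρ) * CFC.sqrt ρ := by
          rw [hsqrt]
      _ = (CFC.sqrt ρ * CFC.sqrt ρ) ^ 2 := by noncomm_ring
      _ = ρ ^ 2 := by rw [hsqrt]
  rw [Fid, hconj, msqrt_eq_cfcSqrt (hρ.1.pow 2), CFC.sqrt_sq ρ hρ.1.nonneg, hρ.2]
  norm_num

end States

section Cmax

variable {n : Type*} [Fintype n]

def cmaxFeasible (ρ : Matrix n n ℂ) : Set ℝ :=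
  {l | 0 ≤ l ∧ ∃ δ, IsIncoherent δ ∧ (l • δ - ρ).PosSemidef}

lemma Cmax_eq_logb_sInf (ρ : Matrix n n ℂ) : Cmax ρ = Real.logb 2 (sInf (cmaxFeasible ρ)) :=
  rfl

lemma card_mem_cmaxFeasible [DecidableEq n] {ρ : Matrix n n ℂ} (hρ : IsState ρ) :
    (Fintype.card n : ℝ) ∈ cmaxFeasible ρ := by
  have := hρ.nonempty
  refine ⟨by positivity, _, isIncoherent_maxMixed, ?_⟩
  rw [smul_smul, mul_inv_cancel₀ (Nat.cast_ne_zero.mpr Fintype.card_ne_zero), one_smul]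
  exact hρ.le_one

lemma one_le_of_mem_cmaxFeasible {ρ : Matrix n n ℂ} (hρ : IsState ρ) {l : ℝ}
    (hl : l ∈ cmaxFeasible ρ) : 1 ≤ l := by
  obtain ⟨-, δ, hδ, hle⟩ := hl
  have h := hle.trace_nonneg
  rw [Matrix.trace_sub, Matrix.trace_smul, hδ.1.2, hρ.2, Complex.real_smul, mul_one,
    ← Complex.ofReal_one, ← Complex.ofReal_sub, Complex.zero_le_real] at h
  linarith

lemma mem_cmaxFeasible_of_le {ρ : Matrix n n ℂ} {l l' : ℝ} (hl : l ∈ cmaxFeasible ρ)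
    (hll' : l ≤ l') : l' ∈ cmaxFeasible ρ := by
  obtain ⟨hl0, δ, hδ, hle⟩ := hl
  refine ⟨hl0.trans hll', δ, hδ, ?_⟩
  have h : l' • δ - ρ = (l • δ - ρ) + (l' - l) • δ := by module
  rw [h]
  exact hle.add (hδ.1.1.smul (sub_nonneg.mpr hll'))

lemma exists_nat_mem_cmaxFeasible [DecidableEq n] {ρ : Matrix n n ℂ} (hρ : IsState ρ) :
    ∃ M : ℕ, 2 ≤ M ∧ (M : ℝ) ∈ cmaxFeasible ρ ∧ Real.logb 2 M ≤ Cmax ρ + 1 := by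
  set lam := sInf (cmaxFeasible ρ)
  have hne : (cmaxFeasible ρ).Nonempty := ⟨_, card_mem_cmaxFeasible hρ⟩
  have hlam : 1 ≤ lam := le_csInf hne fun l hl => one_le_of_mem_cmaxFeasible hρ hl
  have hfloor : 1 ≤ ⌊lam⌋₊ := Nat.le_floor (by exact_mod_cast hlam)
  obtain ⟨l, hl, hlM⟩ := exists_lt_of_csInf_lt hne (Nat.lt_floor_add_one lam)
  refine ⟨⌊lam⌋₊ + 1, by omega, mem_cmaxFeasible_of_le hl (by exact_mod_cast hlM.le), ?_⟩
  have hM : ((⌊lam⌋₊ + 1 : ℕ) : ℝ) ≤ 2 * lam := by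
    push_cast
    linarith [Nat.floor_le (zero_le_one.trans hlam)]
  calc Real.logb 2 (⌊lam⌋₊ + 1 : ℕ) ≤ Real.logb 2 (2 * lam) :=
        Real.logb_le_logb_of_le one_lt_two (by positivity) hM
    _ = Cmax ρ + 1 := by
        rw [Real.logb_mul two_ne_zero (by positivity), Real.logb_self_eq_one one_lt_two,
          Cmax_eq_logb_sInf, add_comm]

end Cmax

theorem exists_isMIO_map_psiM_eq {n : Type*} [Fintype n] {M : ℕ} (hM : 2 ≤ M)
    {ρ δ : Matrix n n ℂ} (hρ : IsState ρ) (hδ : IsIncoherent δ)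
    (hle : ((M : ℝ) • δ - ρ).PosSemidef) :
    ∃ Λ : Matrix (Fin M) (Fin M) ℂ →ₗ[ℂ] Matrix n n ℂ, IsMIO Λ ∧ Λ (PsiM M) = ρ := by
  have hM0 : M ≠ 0 := by omega
  have hM1 : (1 : ℝ) < M := by exact_mod_cast hM
  have hM1' : (M : ℂ) - 1 ≠ 0 := by exact_mod_cast (sub_pos.mpr hM1).ne'
  set τ := ((M : ℝ) - 1)⁻¹ • ((M : ℝ) • δ - ρ)
  have hτ : IsState τ := by
    refine ⟨hle.smul (inv_nonneg.mpr (sub_nonneg.mpr hM1.le)), ?_⟩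
    rw [Matrix.trace_smul, Matrix.trace_sub, Matrix.trace_smul, hδ.1.2, hρ.2]
    simp only [Complex.real_smul, mul_one]
    push_cast
    exact inv_mul_cancel₀ hM1'
  have hΨ := isStarProjection_psiM hM0
  refine ⟨traceSMul (PsiM M) ρ + traceSMul (1 - PsiM M) τ,
    ⟨(completelyPositive_traceSMul (Matrix.nonneg_iff_posSemidef.mp hΨ.nonneg) hρ.1).add
      (completelyPositive_traceSMul (Matrix.nonneg_iff_posSemidef.mp hΨ.one_sub_nonneg) hτ.1),
      tracePreserving_traceSMul_add_traceSMul_one_sub _ hρ.2 hτ.2, fun δ' hδ' => ?_⟩, ?_⟩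
  · convert hδ using 1
    simp only [LinearMap.add_apply, traceSMul_apply, trace_psiM_mul_of_isDiag hδ'.2,
      Matrix.sub_mul, Matrix.one_mul, Matrix.trace_sub, hδ'.1.2, τ]
    have hM' : (M : ℂ) ≠ 0 := Nat.cast_ne_zero.mpr hM0
    match_scalars
    · field_simp; ring
    · field_simp
  · simp only [LinearMap.add_apply, traceSMul_apply, hΨ.isIdempotentElem.eq, trace_psiM hM0,
      Matrix.sub_mul, Matrix.one_mul, sub_self, Matrix.trace_zero, zero_smul, one_smul, add_zero]

lemma CMIOeps_le_logb {n : Type*} [Fintype n] [DecidableEq n] {ρ : Matrix n n ℂ} {ε : ℝ}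
    {M : ℕ} (hM : 1 ≤ M) {Λ : Matrix (Fin M) (Fin M) ℂ →ₗ[ℂ] Matrix n n ℂ} (hΛ : IsMIO Λ)
    (hF : 1 - ε ≤ Fid ρ (Λ (PsiM M))) : CMIOeps ρ ε ≤ Real.logb 2 M := by
  refine csInf_le ⟨0, ?_⟩ ⟨M, hM, rfl, Λ, hΛ, hF⟩
  rintro _ ⟨M', hM', rfl, -⟩
  exact Real.logb_nonneg one_lt_two (by exact_mod_cast hM')

/-- upper bound of Theorem 4: `C_MIO^ε(ρ) ≤ C_max^ε(ρ) + 1`. -/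
theorem CMIOeps_le_Cmaxeps_add_one {d : ℕ} (ρ : Matrix (Fin d) (Fin d) ℂ) (hρ : IsState ρ)
    (ε : ℝ) (hε : 0 ≤ ε) :
    CMIOeps ρ ε ≤ Cmaxeps ρ ε + 1 := by
  have hne : {r | ∃ ρ', IsState ρ' ∧ 1 - ε ≤ Fid ρ ρ' ∧ r = Cmax ρ'}.Nonempty :=
    ⟨_, ρ, hρ, by rw [Fid_self hρ]; linarith, rfl⟩
  suffices h : CMIOeps ρ ε - 1 ≤ Cmaxeps ρ ε by linarith
  refine le_csInf hne ?_
  rintro _ ⟨ρ', hρ', hF, rfl⟩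
  obtain ⟨M, hM, ⟨-, δ, hδ, hle⟩, hlog⟩ := exists_nat_mem_cmaxFeasible hρ'
  obtain ⟨Λ, hΛ, hΛΨ⟩ := exists_isMIO_map_psiM_eq hM hρ' hδ hle
  have hcost := CMIOeps_le_logb (by omega) hΛ (hΛΨ ▸ hF)
  linarith

end OneShot
end

section
/- Theorem 6: for every state ρ and every ε ≥ 0, the one-shot coherence cost under incoherent operations and under strictly incoherent operations both equal the smoothed monotone C_0: C_IO^ε(ρ) = C_SIO^ε(ρ) = C_0^ε(ρ). -/
/-!
A decomposition `ρ = Σ_j p_j |ψ_j⟩⟨ψ_j|` with `T(ψ_j) ≤ M` for all `j` can be prepared from `Ψ_M`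
by an SIO: for each `j`, the `M` cyclic shifts of an injection of the support of `ψ_j` into
`Fin M` give Kraus operators with at most one nonzero entry in each row and column, which together
send `Ψ_M` to `|ψ_j⟩⟨ψ_j|`; weighting them by `√p_j` mixes the pure states. Conversely, a Kraus
operator of an IO has at most one nonzero entry per column, so it maps `|Ψ_M⟩` to a vector with
at most `M` nonzero coefficients, whence `C_0(Λ(Ψ_M)) ≤ log₂ M`. So every value of `C_0` on the
fidelity ball around `ρ` is an SIO cost (the minimum defining `C_0` is attained), and every IO
cost dominates such a value.
-/

open scoped Matrix ComplexOrder

namespace OneShot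

open Matrix Finset

variable {ι κ : Type*}

section Outer

lemma outer_eq_vecMulVec (ψ : ι → ℂ) : outer ψ = vecMulVec ψ (star ψ) := rfl

lemma trace_outer [Fintype ι] (ψ : ι → ℂ) :
    (outer ψ).trace = ((∑ i, Complex.normSq (ψ i) : ℝ) : ℂ) := by
  simp [outer_eq_vecMulVec, trace_vecMulVec, dotProduct, Complex.mul_conj]

lemma mul_outer_mul_conjTranspose [Fintype ι] (K : Matrix κ ι ℂ) (ψ : ι → ℂ) :
    K * outer ψ * Kᴴ = outer (K *ᵥ ψ) := by
  rw [outer_eq_vecMulVec, mul_vecMulVec, vecMulVec_mul, ← star_mulVec, outer_eq_vecMulVec]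

lemma outer_smul (c : ℂ) (ψ : ι → ℂ) : outer (c • ψ) = (c * star c) • outer ψ := by
  ext i j
  simp only [outer, of_apply, Pi.smul_apply, Matrix.smul_apply, smul_eq_mul, star_mul']
  ring

lemma outer_ofReal_smul (r : ℝ) (ψ : ι → ℂ) : outer ((r : ℂ) • ψ) = (r ^ 2) • outer ψ := by
  rw [outer_smul, Complex.star_def, Complex.conj_ofReal, ← Complex.ofReal_mul, ← sq,
    Complex.coe_smul]

lemma PsiM_eq_outer (M : ℕ) : PsiM M = outer fun _ => (((√M)⁻¹ : ℝ) : ℂ) := by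
  ext i j
  simp [PsiM, outer, ← Complex.ofReal_mul, ← mul_inv]

lemma T_smul [Fintype ι] {c : ℂ} (hc : c ≠ 0) (ψ : ι → ℂ) : T (c • ψ) = T ψ := by
  simp [T, hc]

lemma T_le_card [Fintype ι] (ψ : ι → ℂ) : T ψ ≤ Fintype.card ι :=
  card_filter_le _ _

lemma one_le_T [Fintype ι] {ψ : ι → ℂ} (h : ∑ i, Complex.normSq (ψ i) = 1) : 1 ≤ T ψ := by
  by_contra! h0
  have hψ : ∀ i, ψ i = 0 := by simpa [T] using h0
  simp [hψ] at h

end Outer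

section Decomposition

lemma IsDecomposition.isState [Fintype ι] {ρ : Matrix ι ι ℂ} {n : ℕ} {p : Fin n → ℝ}
    {ψ : Fin n → ι → ℂ} (h : IsDecomposition ρ n p ψ) : IsState ρ := by
  obtain ⟨hp, hsum, hnorm, rfl⟩ := h
  refine ⟨posSemidef_sum _ fun j _ => (posSemidef_vecMulVec_self_star (ψ j)).smul (hp j).le, ?_⟩
  simp [trace_sum, trace_smul, trace_outer, hnorm, ← Complex.ofReal_sum, hsum]

lemma IsDecomposition.pos [Fintype ι] {ρ : Matrix ι ι ℂ} {n : ℕ} {p : Fin n → ℝ}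
    {ψ : Fin n → ι → ℂ} (h : IsDecomposition ρ n p ψ) : 0 < n := by
  rcases n with _ | n
  · simpa using h.2.1
  · exact n.succ_pos

lemma sum_equivFin_subtype {α M : Type*} [Fintype α] [AddCommMonoid M] (P : α → Prop)
    [DecidablePred P] (f : α → M) (hf : ∀ a, ¬P a → f a = 0) :
    ∑ j, f ((Fintype.equivFin {a // P a}).symm j) = ∑ a, f a := by
  rw [(Fintype.equivFin _).symm.sum_comp (fun a : {a // P a} => f a),
    ← sum_subtype (univ.filter P) (by simp), sum_filter_of_ne fun a _ => not_imp_comm.mp (hf a)]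

lemma exists_isDecomposition_sum_outer [Fintype ι] {α : Type*} [Fintype α] (x : α → ι → ℂ)
    (hx : ∑ a, ∑ i, Complex.normSq (x a i) = 1) :
    ∃ n p ψ, IsDecomposition (∑ a, outer (x a)) n p ψ ∧ ∀ j, ∃ a, T (ψ j) = T (x a) := by
  classical
  set w : α → ℝ := fun a => ∑ i, Complex.normSq (x a i)
  have hw_nonneg a : 0 ≤ w a := sum_nonneg fun i _ => Complex.normSq_nonneg _
  have hx_zero a (ha : w a = 0) : x a = 0 := by
    funext i
    exact Complex.normSq_eq_zero.mp
      ((sum_eq_zero_iff_of_nonneg fun i _ => Complex.normSq_nonneg _).mp ha i (mem_univ i))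
  let e := Fintype.equivFin {a // w a ≠ 0}
  let a (j : Fin (Fintype.card {a // w a ≠ 0})) : α := e.symm j
  have hwa j : w (a j) ≠ 0 := (e.symm j).2
  have hwa_pos j : 0 < w (a j) := (hw_nonneg _).lt_of_ne' (hwa j)
  refine ⟨_, fun j => w (a j), fun j => (((√(w (a j)))⁻¹ : ℝ) : ℂ) • x (a j),
    ⟨hwa_pos, ?_, fun j => ?_, ?_⟩,
    fun j => ⟨a j, T_smul (by simpa using (Real.sqrt_pos.mpr (hwa_pos j)).ne') _⟩⟩
  · rw [sum_equivFin_subtype _ w fun a ha => not_not.mp ha, hx]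
  · simp only [Pi.smul_apply, smul_eq_mul, Complex.normSq_mul, Complex.normSq_ofReal, ← mul_inv,
      Real.mul_self_sqrt (hw_nonneg _), ← mul_sum]
    exact inv_mul_cancel₀ (hwa j)
  · rw [← sum_equivFin_subtype (fun a => w a ≠ 0) (fun a => outer (x a))
      fun a ha => by simp [hx_zero a (not_not.mp ha), outer_eq_vecMulVec]]
    refine sum_congr rfl fun j _ => ?_
    rw [outer_ofReal_smul, smul_smul, inv_pow, Real.sq_sqrt (hw_nonneg _),
      mul_inv_cancel₀ (hwa j), one_smul]

lemma exists_isDecomposition [Fintype ι] {ρ : Matrix ι ι ℂ} (hρ : IsState ρ) :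
    ∃ n p ψ, IsDecomposition ρ n p ψ := by
  obtain ⟨m, v, rfl⟩ := posSemidef_iff_eq_sum_vecMulVec.mp hρ.1
  have htr : ∑ k, ∑ i, Complex.normSq (v k i) = 1 := by
    have := hρ.2
    simp only [← outer_eq_vecMulVec, trace_sum, trace_outer] at this
    exact_mod_cast this
  obtain ⟨n, p, ψ, hdec, -⟩ := exists_isDecomposition_sum_outer v htr
  exact ⟨n, p, ψ, hdec⟩

end Decomposition

section C0

lemma logb_two_natCast_nonneg (k : ℕ) : 0 ≤ Real.logb 2 k :=
  div_nonneg (Real.log_natCast_nonneg k) (Real.log_nonneg one_le_two)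

lemma C0_le_logb_sup [Fintype ι] {ρ : Matrix ι ι ℂ} {n : ℕ} {p : Fin n → ℝ}
    {ψ : Fin n → ι → ℂ} (h : IsDecomposition ρ n p ψ) :
    C0 ρ ≤ Real.logb 2 (univ.sup fun j => T (ψ j) : ℕ) :=
  csInf_le ⟨0, by rintro _ ⟨_, _, _, _, rfl⟩; exact logb_two_natCast_nonneg _⟩ ⟨n, p, ψ, h, rfl⟩

lemma exists_isDecomposition_C0_eq [Fintype ι] {ρ : Matrix ι ι ℂ} (hρ : IsState ρ) :
    ∃ n p ψ, IsDecomposition ρ n p ψ ∧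
      C0 ρ = Real.logb 2 (univ.sup fun j => T (ψ j) : ℕ) := by
  set S := {r | ∃ n p ψ, IsDecomposition ρ n p ψ ∧
    r = Real.logb 2 (univ.sup fun j => T (ψ j) : ℕ)}
  obtain ⟨n, p, ψ, h⟩ := exists_isDecomposition hρ
  have hS : S.Nonempty := ⟨_, n, p, ψ, h, rfl⟩
  -- `C0` is a minimum: the values `log₂ k` range over `k ≤ card ι` only
  have hfin : S.Finite := by
    refine ((Set.finite_Iic (Fintype.card ι)).image fun k : ℕ => Real.logb 2 k).subset ?_
    rintro _ ⟨n, p, ψ, -, rfl⟩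
    exact ⟨_, Finset.sup_le fun j _ => T_le_card (ψ j), rfl⟩
  exact hS.csInf_mem hfin

end C0

section Incoherent

def AtMostOneNonzeroPerColumn {α β : Type*} (K : Matrix α β ℂ) : Prop :=
  ∀ j p q, K p j ≠ 0 → K q j ≠ 0 → p = q

lemma AtMostOneNonzeroPerColumn.smul {α β : Type*} {K : Matrix α β ℂ}
    (hK : AtMostOneNonzeroPerColumn K) (c : ℂ) : AtMostOneNonzeroPerColumn (c • K) :=
  fun j p q hp hq => hK j p q (right_ne_zero_of_mul hp) (right_ne_zero_of_mul hq)

lemma isIncoherent_diagonal_single [Fintype ι] [DecidableEq ι] (i : ι) :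
    IsIncoherent (diagonal (Pi.single i (1 : ℂ))) := by
  refine ⟨⟨PosSemidef.diagonal fun j => ?_, by simp [trace_diagonal]⟩, isDiag_diagonal _⟩
  rcases eq_or_ne j i with rfl | h
  · simp
  · simp [h]

lemma exists_smul_isIncoherent [Fintype ι] [DecidableEq ι] [Nonempty ι] {A : Matrix ι ι ℂ}
    (hA : A.PosSemidef) (hd : A.IsDiag) :
    ∃ c : ℝ, 0 ≤ c ∧ ∃ δ, IsIncoherent δ ∧ A = (c : ℂ) • δ := by
  obtain ⟨c, hc, htr⟩ : ∃ c : ℝ, 0 ≤ c ∧ A.trace = c :=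
    ⟨_, (Complex.nonneg_iff.mp hA.trace_nonneg).1,
      Complex.eq_re_of_ofReal_le (r := 0) (by simpa using hA.trace_nonneg)⟩
  rcases hc.eq_or_lt with rfl | hpos
  · refine ⟨0, le_rfl, _, isIncoherent_diagonal_single (Classical.arbitrary ι), ?_⟩
    simp [hA.trace_eq_zero_iff.mp (by simpa using htr)]
  refine ⟨c, hc, ((c⁻¹ : ℝ) : ℂ) • A, ⟨⟨hA.smul (Complex.zero_le_real.mpr (inv_nonneg.mpr hc)), ?_⟩,
    hd.smul _⟩, ?_⟩
  · rw [trace_smul, htr, smul_eq_mul, ← Complex.ofReal_mul, inv_mul_cancel₀ hpos.ne',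
      Complex.ofReal_one]
  · rw [smul_smul, ← Complex.ofReal_mul, mul_inv_cancel₀ hpos.ne', Complex.ofReal_one, one_smul]

lemma mul_diagonal_mul_conjTranspose_apply [Fintype ι] [DecidableEq ι] (K : Matrix κ ι ℂ)
    (g : ι → ℂ) (p q : κ) : (K * diagonal g * Kᴴ) p q = ∑ i, K p i * g i * star (K q i) := by
  simp [mul_apply, diagonal_apply]

lemma AtMostOneNonzeroPerColumn.incoherentPreserving [Fintype ι] [DecidableEq ι] [Fintype κ]
    [DecidableEq κ] [Nonempty κ] {K : Matrix κ ι ℂ} (hK : AtMostOneNonzeroPerColumn K) :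
    IncoherentPreserving K := by
  intro δ hδ
  refine exists_smul_isIncoherent (hδ.1.1.mul_mul_conjTranspose_same K) fun p q hpq => ?_
  change (K * δ * Kᴴ) p q = 0
  rw [← hδ.2.diagonal_diag, mul_diagonal_mul_conjTranspose_apply]
  refine sum_eq_zero fun i _ => ?_
  by_cases hp : K p i = 0
  · simp [hp]
  by_cases hq : K q i = 0
  · simp [hq]
  exact absurd (hK i p q hp hq) hpq

lemma IncoherentPreserving.atMostOneNonzeroPerColumn [Fintype ι] [DecidableEq ι] [Fintype κ]
    {K : Matrix κ ι ℂ} (hK : IncoherentPreserving K) : AtMostOneNonzeroPerColumn K := by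
  intro i p q hp hq
  by_contra hpq
  obtain ⟨c, -, δ, hδ, hKδ⟩ := hK _ (isIncoherent_diagonal_single i)
  have hpq_entry := congrFun₂ hKδ p q
  simp only [mul_diagonal_mul_conjTranspose_apply, Pi.single_apply, mul_ite, mul_one, mul_zero,
    ite_mul, zero_mul, sum_ite_eq', mem_univ, if_true, Matrix.smul_apply, hδ.2 hpq,
    smul_zero] at hpq_entry
  exact mul_ne_zero hp (star_ne_zero.mpr hq) hpq_entry

lemma T_mulVec_le_card [Fintype ι] [Fintype κ] {K : Matrix κ ι ℂ}
    (hK : AtMostOneNonzeroPerColumn K) (v : ι → ℂ) : T (K *ᵥ v) ≤ Fintype.card ι := by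
  classical
  have hsupp : (univ.filter fun p => (K *ᵥ v) p ≠ 0) ⊆
      univ.biUnion fun i => univ.filter fun p => K p i ≠ 0 := by
    intro p hp
    obtain ⟨i, -, hi⟩ := exists_ne_zero_of_sum_ne_zero (mem_filter.mp hp).2
    exact mem_biUnion.mpr ⟨i, mem_univ i, mem_filter.mpr ⟨mem_univ p, left_ne_zero_of_mul hi⟩⟩
  calc T (K *ᵥ v) ≤ _ := card_le_card hsupp
    _ ≤ ∑ i, (univ.filter fun p => K p i ≠ 0).card := card_biUnion_le
    _ ≤ ∑ _i : ι, 1 := sum_le_sum fun i _ => card_le_one.mpr fun p hp q hq =>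
        hK i p q (mem_filter.mp hp).2 (mem_filter.mp hq).2
    _ = Fintype.card ι := by simp

end Incoherent

section Kraus

def krausMap [Fintype ι] {α : Type*} [Fintype α] (K : α → Matrix κ ι ℂ) :
    Matrix ι ι ℂ →ₗ[ℂ] Matrix κ κ ℂ where
  toFun A := ∑ a, K a * A * (K a)ᴴ
  map_add' A B := by simp [Matrix.mul_add, Matrix.add_mul, sum_add_distrib]
  map_smul' c A := by simp [smul_sum]

lemma krausMap_apply [Fintype ι] {α : Type*} [Fintype α] (K : α → Matrix κ ι ℂ)
    (A : Matrix ι ι ℂ) : krausMap K A = ∑ a, K a * A * (K a)ᴴ := rfl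

lemma isSIO_krausMap [Fintype ι] [DecidableEq ι] [Fintype κ] {α : Type*} [Fintype α]
    (K : α → Matrix κ ι ℂ) (hK : ∀ a, IncoherentPreserving (K a))
    (hKH : ∀ a, IncoherentPreserving (K a)ᴴ) (hsum : ∑ a, (K a)ᴴ * K a = 1) :
    IsSIO (krausMap K) := by
  let e := (Fintype.equivFin α).symm
  refine ⟨Fintype.card α, fun n => K (e n), fun n => hK _, fun n => hKH _, ?_, fun A => ?_⟩
  · rw [e.sum_comp fun a => (K a)ᴴ * K a, hsum]
  · exact (e.sum_comp fun a => K a * A * (K a)ᴴ).symm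

lemma IsSIO.isIO [Fintype ι] [DecidableEq ι] [Fintype κ] {Λ : Matrix ι ι ℂ →ₗ[ℂ] Matrix κ κ ℂ}
    (hΛ : IsSIO Λ) : IsIO Λ :=
  let ⟨N, K, hK, _, hsum, hΛ⟩ := hΛ
  ⟨N, K, hK, hsum, hΛ⟩

lemma trace_sum_mul_mul_conjTranspose [Fintype ι] [DecidableEq ι] [Fintype κ] {α : Type*}
    [Fintype α] {K : α → Matrix κ ι ℂ} (hsum : ∑ a, (K a)ᴴ * K a = 1) (A : Matrix ι ι ℂ) :
    (∑ a, K a * A * (K a)ᴴ).trace = A.trace := by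
  rw [trace_sum]
  simp_rw [trace_mul_cycle _ A]
  rw [← trace_sum, ← sum_mul, hsum, one_mul]

lemma trace_PsiM {M : ℕ} (hM : 0 < M) : (PsiM M).trace = 1 := by
  simp [PsiM, trace, hM.ne']

lemma IsIO.exists_isDecomposition_apply_PsiM [Fintype ι] [DecidableEq ι] {M : ℕ} (hM : 0 < M)
    {Λ : Matrix (Fin M) (Fin M) ℂ →ₗ[ℂ] Matrix ι ι ℂ} (hΛ : IsIO Λ) :
    ∃ n p ψ, IsDecomposition (Λ (PsiM M)) n p ψ ∧ ∀ j, T (ψ j) ≤ M := by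
  obtain ⟨N, K, hK, hsum, hΛ⟩ := hΛ
  set v : Fin M → ℂ := fun _ => (((√M)⁻¹ : ℝ) : ℂ)
  have hΛΨ : Λ (PsiM M) = ∑ n, outer (K n *ᵥ v) := by
    simp only [hΛ, PsiM_eq_outer, mul_outer_mul_conjTranspose, v]
  have htr : ∑ n, ∑ i, Complex.normSq ((K n *ᵥ v) i) = 1 := by
    have h := trace_sum_mul_mul_conjTranspose hsum (PsiM M)
    rw [← hΛ, hΛΨ, trace_PsiM hM, trace_sum] at h
    simp only [trace_outer] at h
    exact_mod_cast h
  obtain ⟨n, p, ψ, hdec, hT⟩ := exists_isDecomposition_sum_outer _ htr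
  refine ⟨n, p, ψ, hΛΨ ▸ hdec, fun j => ?_⟩
  obtain ⟨a, ha⟩ := hT j
  simpa [ha] using T_mulVec_le_card (hK a).atMostOneNonzeroPerColumn v

lemma logb_two_natCast_le {k m : ℕ} (h : k ≤ m) : Real.logb 2 k ≤ Real.logb 2 m := by
  rcases k.eq_zero_or_pos with rfl | hk
  · simpa using logb_two_natCast_nonneg m
  · exact Real.logb_le_logb_of_le one_lt_two (by exact_mod_cast hk) (by exact_mod_cast h)

lemma IsIO.C0_apply_PsiM_le [Fintype ι] [DecidableEq ι] {M : ℕ} (hM : 0 < M)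
    {Λ : Matrix (Fin M) (Fin M) ℂ →ₗ[ℂ] Matrix ι ι ℂ} (hΛ : IsIO Λ) :
    IsState (Λ (PsiM M)) ∧ C0 (Λ (PsiM M)) ≤ Real.logb 2 M := by
  obtain ⟨n, p, ψ, hdec, hT⟩ := hΛ.exists_isDecomposition_apply_PsiM hM
  exact ⟨hdec.isState, (C0_le_logb_sup hdec).trans
    (logb_two_natCast_le (Finset.sup_le fun j _ => hT j))⟩

end Kraus

section Dilution

variable {M : ℕ}

def shiftKraus (e : ι → Fin M) (ψ : ι → ℂ) (m : Fin M) : Matrix ι (Fin M) ℂ :=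
  of fun p i => if e p = i + m then ψ p else 0

lemma atMostOneNonzeroPerColumn_shiftKraus {e : ι → Fin M} {ψ : ι → ℂ}
    (he : Set.InjOn e {p | ψ p ≠ 0}) (m : Fin M) :
    AtMostOneNonzeroPerColumn (shiftKraus e ψ m) := by
  intro i p q hp hq
  simp only [shiftKraus, of_apply, ne_eq, ite_eq_right_iff, not_forall] at hp hq
  exact he hp.2 hq.2 (hp.1.trans hq.1.symm)

lemma atMostOneNonzeroPerColumn_shiftKraus_conjTranspose [NeZero M] (e : ι → Fin M)
    (ψ : ι → ℂ) (m : Fin M) : AtMostOneNonzeroPerColumn (shiftKraus e ψ m)ᴴ := by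
  intro p i j hi hj
  simp only [conjTranspose_apply, shiftKraus, of_apply, ne_eq, star_eq_zero, ite_eq_right_iff,
    not_forall] at hi hj
  exact add_right_cancel (hi.1.symm.trans hj.1)

lemma shiftKraus_mulVec_const [Fintype ι] [NeZero M] (e : ι → Fin M) (ψ : ι → ℂ) (m : Fin M)
    (c : ℂ) : shiftKraus e ψ m *ᵥ (fun _ => c) = c • ψ := by
  ext p
  simp [shiftKraus, mulVec, dotProduct, ← sub_eq_iff_eq_add, mul_comm]

lemma sum_shiftKraus_conjTranspose_mul [Fintype ι] [NeZero M] (e : ι → Fin M) {ψ : ι → ℂ}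
    (hψ : ∑ p, Complex.normSq (ψ p) = 1) :
    ∑ m, (shiftKraus e ψ m)ᴴ * shiftKraus e ψ m = 1 := by
  ext i j
  simp only [Matrix.sum_apply, mul_apply, conjTranspose_apply, shiftKraus, of_apply]
  rw [sum_comm]
  rcases eq_or_ne i j with rfl | hij
  · simp [← sub_eq_iff_eq_add', ← Complex.normSq_eq_conj_mul_self, ← Complex.ofReal_sum, hψ]
  · rw [one_apply_ne hij]
    refine sum_eq_zero fun p _ => sum_eq_zero fun m _ => ?_
    split_ifs with h₁ h₂ <;> simp_all

lemma sum_shiftKraus_mul_PsiM_mul [Fintype ι] [NeZero M] (e : ι → Fin M) (ψ : ι → ℂ) :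
    ∑ m, shiftKraus e ψ m * PsiM M * (shiftKraus e ψ m)ᴴ = outer ψ := by
  simp only [PsiM_eq_outer, mul_outer_mul_conjTranspose, shiftKraus_mulVec_const,
    outer_ofReal_smul, sum_const, card_univ, Fintype.card_fin]
  rw [← Nat.cast_smul_eq_nsmul ℝ, smul_smul, inv_pow, Real.sq_sqrt (Nat.cast_nonneg M),
    mul_inv_cancel₀ (NeZero.ne _), one_smul]

lemma exists_injOn_support [Fintype ι] [NeZero M] {ψ : ι → ℂ} (hT : T ψ ≤ M) :
    ∃ e : ι → Fin M, Set.InjOn e {p | ψ p ≠ 0} := by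
  have hcard : {p | ψ p ≠ 0}.encard ≤ (Set.univ : Set (Fin M)).encard := by
    have hsupp : {p | ψ p ≠ 0} = ↑(univ.filter fun p => ψ p ≠ 0) := by simp
    rw [Set.encard_univ, ENat.card_eq_coe_fintype_card, Fintype.card_fin, hsupp,
      Set.encard_coe_eq_coe_finsetCard]
    exact_mod_cast hT
  obtain ⟨e, -, he⟩ := (Set.toFinite _).exists_injOn_of_encard_le hcard
  exact ⟨e, he⟩

lemma IsDecomposition.exists_isSIO_apply_PsiM_eq [Fintype ι] [DecidableEq ι] [NeZero M]
    {ρ : Matrix ι ι ℂ} {n : ℕ} {p : Fin n → ℝ} {ψ : Fin n → ι → ℂ}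
    (hdec : IsDecomposition ρ n p ψ) (hT : ∀ j, T (ψ j) ≤ M) :
    ∃ Λ : Matrix (Fin M) (Fin M) ℂ →ₗ[ℂ] Matrix ι ι ℂ, IsSIO Λ ∧ Λ (PsiM M) = ρ := by
  have : Nonempty ι :=
    Fintype.card_pos_iff.mp ((one_le_T (hdec.2.2.1 ⟨0, hdec.pos⟩)).trans (T_le_card _))
  obtain ⟨hp, hpsum, hnorm, rfl⟩ := hdec
  have hsq j : √(p j) * √(p j) = p j := Real.mul_self_sqrt (hp j).le
  choose e he using fun j => exists_injOn_support (hT j)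
  let K (jm : Fin n × Fin M) : Matrix ι (Fin M) ℂ :=
    ((√(p jm.1) : ℝ) : ℂ) • shiftKraus (e jm.1) (ψ jm.1) jm.2
  refine ⟨krausMap K, isSIO_krausMap K (fun jm => ?_) (fun jm => ?_) ?_, ?_⟩
  · exact ((atMostOneNonzeroPerColumn_shiftKraus (he _) _).smul _).incoherentPreserving
  · rw [conjTranspose_smul]
    exact ((atMostOneNonzeroPerColumn_shiftKraus_conjTranspose _ _ _).smul _).incoherentPreserving
  · simp only [K, Fintype.sum_prod_type, Complex.coe_smul, conjTranspose_smul, star_trivial,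
      Matrix.smul_mul, Matrix.mul_smul, smul_smul, hsq, ← smul_sum,
      sum_shiftKraus_conjTranspose_mul _ (hnorm _), ← sum_smul, hpsum, one_smul]
  · simp only [K, krausMap_apply, Fintype.sum_prod_type, Complex.coe_smul, conjTranspose_smul,
      star_trivial, Matrix.smul_mul, Matrix.mul_smul, smul_smul, hsq, ← smul_sum,
      sum_shiftKraus_mul_PsiM_mul]

end Dilution

section Cost

lemma exists_isSIO_apply_PsiM_eq_of_isState [Fintype ι] [DecidableEq ι] {ρ : Matrix ι ι ℂ}
    (hρ : IsState ρ) :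
    ∃ M : ℕ, 1 ≤ M ∧ C0 ρ = Real.logb 2 M ∧
      ∃ Λ : Matrix (Fin M) (Fin M) ℂ →ₗ[ℂ] Matrix ι ι ℂ, IsSIO Λ ∧ Λ (PsiM M) = ρ := by
  obtain ⟨n, p, ψ, hdec, hC0⟩ := exists_isDecomposition_C0_eq hρ
  have hT j : T (ψ j) ≤ univ.sup fun j => T (ψ j) := le_sup (f := fun j => T (ψ j)) (mem_univ j)
  have hM : 1 ≤ univ.sup fun j => T (ψ j) := (one_le_T (hdec.2.2.1 ⟨0, hdec.pos⟩)).trans (hT _)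
  have : NeZero (univ.sup fun j => T (ψ j)) := ⟨by omega⟩
  exact ⟨_, hM, hC0, hdec.exists_isSIO_apply_PsiM_eq hT⟩

noncomputable def oneShotCost [Fintype ι] [DecidableEq ι]
    (O : ∀ M : ℕ, (Matrix (Fin M) (Fin M) ℂ →ₗ[ℂ] Matrix ι ι ℂ) → Prop)
    (ρ : Matrix ι ι ℂ) (ε : ℝ) : ℝ :=
  sInf {r | ∃ M : ℕ, 1 ≤ M ∧ r = Real.logb 2 M ∧
    ∃ Λ : Matrix (Fin M) (Fin M) ℂ →ₗ[ℂ] Matrix ι ι ℂ, O M Λ ∧ 1 - ε ≤ Fid ρ (Λ (PsiM M))}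

theorem oneShotCost_eq_C0eps [Fintype ι] [DecidableEq ι]
    {O : ∀ M : ℕ, (Matrix (Fin M) (Fin M) ℂ →ₗ[ℂ] Matrix ι ι ℂ) → Prop}
    (hSIO : ∀ M Λ, IsSIO Λ → O M Λ) (hIO : ∀ M Λ, O M Λ → IsIO Λ) (ρ : Matrix ι ι ℂ) (ε : ℝ) :
    oneShotCost O ρ ε = C0eps ρ ε := by
  refine csInf_eq_csInf_of_forall_exists_le ?_ ?_
  · rintro _ ⟨M, hM, rfl, Λ, hΛ, hfid⟩
    obtain ⟨hstate, hC0⟩ := (hIO M Λ hΛ).C0_apply_PsiM_le hM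
    exact ⟨_, ⟨_, hstate, hfid, rfl⟩, hC0⟩
  · rintro _ ⟨ρ', hρ', hfid, rfl⟩
    obtain ⟨M, hM, hC0, Λ, hΛ, rfl⟩ := exists_isSIO_apply_PsiM_eq_of_isState hρ'
    exact ⟨_, ⟨M, hM, rfl, Λ, hSIO M Λ hΛ, hfid⟩, hC0.ge⟩

end Cost

theorem CIOeps_CSIOeps_eq_C0eps_general {d : ℕ} (ρ : Matrix (Fin d) (Fin d) ℂ)
    (ε : ℝ) :
    CIOeps ρ ε = C0eps ρ ε ∧ CSIOeps ρ ε = C0eps ρ ε :=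
  ⟨oneShotCost_eq_C0eps (fun _ _ h => h.isIO) (fun _ _ h => h) ρ ε,
    oneShotCost_eq_C0eps (fun _ _ h => h) (fun _ _ h => h.isIO) ρ ε⟩

/-- Theorem 6: `C_IO^ε(ρ) = C_SIO^ε(ρ) = C_0^ε(ρ)`. -/
theorem CIOeps_CSIOeps_eq_C0eps {d : ℕ} (ρ : Matrix (Fin d) (Fin d) ℂ) (hρ : IsState ρ)
    (ε : ℝ) (hε : 0 ≤ ε) :
    CIOeps ρ ε = C0eps ρ ε ∧ CSIOeps ρ ε = C0eps ρ ε :=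
  CIOeps_CSIOeps_eq_C0eps_general ρ ε

end OneShot
end
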